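/- For every positive integer M, the function f_M(x,y,z) = (1/3)·(2(x+y+z) − ((x+y)² + xy + (x+z)² + xz + (y+z)² + yz)/(2M)) on ℝ³ satisfies f_M(x,y,z) ≤ 2M/5 for all real x, y, z, with equality at x = y = z = 2M/5. -/
import Mathlib


/-- The bounding function f_M(x,y,z) of the LP DoFs converse. -/
noncomputable def fM (M : ℕ) (x y z : ℝ) : ℝ :=
  (1 / 3) * (2 * (x + y + z) -
    ((x + y) ^ 2 + x * y + (x + z) ^ 2 + x * z + (y + z) ^ 2 + y * z) / (2 * M))

/-- For every positive integer M, f_M(x,y,z) ≤ 2M/5 for all real x,y,z,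
with equality at x = y = z = 2M/5. -/
theorem fM_global_max (M : ℕ) (hM : 0 < M) :
    (∀ x y z : ℝ, fM M x y z ≤ 2 * M / 5) ∧
    fM M (2 * M / 5) (2 * M / 5) (2 * M / 5) = 2 * M / 5 := by
  have hm : (0:ℝ) < M := by exact_mod_cast hM
  constructor
  · intro x y z
    rw [fM, ← sub_nonneg]
    have key : 2 * (M:ℝ) / 5 - (1 / 3) * (2 * (x + y + z) -
        ((x + y) ^ 2 + x * y + (x + z) ^ 2 + x * z + (y + z) ^ 2 + y * z) / (2 * M))
        = (12 * M^2 - 20 * M * (x+y+z) + 10*(x^2+y^2+z^2) + 15*(x*y+x*z+y*z)) / (30 * M) := by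
      field_simp; ring
    rw [key]
    apply div_nonneg _ (by positivity)
    nlinarith [sq_nonneg (x + y + z - 6*M/5), sq_nonneg (x - y), sq_nonneg (x - z), sq_nonneg (y - z)]
  · rw [fM]; field_simp; ring
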